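/- Every (r,r+1;5)-balanced biregular graph has order divisible by 4; consequently, for r > 2, n_bb(r,r+1;5) ≥ r² + r + 4 if r ≡ 0 or 3 (mod 4), and n_bb(r,r+1;5) ≥ r² + r + 6 if r ≡ 1 or 2 (mod 4). -/

import Mathlib

open SimpleGraph Set

/-- The degree of a vertex, via the natural cardinality of its neighbor set. -/
noncomputable def deg {V : Type*} (G : SimpleGraph V) (v : V) : ℕ :=
  (G.neighborSet v).ncard

/-- Number of edges both of whose endpoints have degree `d`. -/
noncomputable def edgeCountDeg {V : Type*} (G : SimpleGraph V) (d : ℕ) : ℕ :=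
  {e ∈ G.edgeSet | ∀ v ∈ e, deg G v = d}.ncard

/-- An `(r,s;g)`-balanced biregular graph: girth `g`, degree set exactly `{r, s}`,
and equally many vertices of degree `r` as of degree `s`. -/
def IsBabi {V : Type*} (r s g : ℕ) (G : SimpleGraph V) : Prop :=
  G.girth = g ∧ (∀ v, deg G v = r ∨ deg G v = s) ∧
  (∃ v, deg G v = r) ∧ (∃ v, deg G v = s) ∧
  {v | deg G v = r}.ncard = {v | deg G v = s}.ncard

/-!
Exactly one of the two degree classes consists of odd-degree vertices, and there is an even
number of those; the classes have equal size, so the order is twice an even number.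

In a graph of girth at least five, the sets `{w} ∪ N(w) \ {u}` for the neighbours `w` of a
vertex `u` are pairwise disjoint and avoid `u`, so `1 + ∑_{w ~ u} deg w ≤ n`. At a vertex of
degree `r + 1` this is the Moore-type bound `n ≥ r² + r + 1`, which together with `4 ∣ n` gives
both bounds except for the order `n = r² + r + 2` when `r ≡ 1, 2 (mod 4)`. For that order the
same count shows that a vertex of degree `r + 1` has at most one neighbour of degree `r + 1`;
double counting the edges between the two classes then shows that no two vertices of degree `r`
are adjacent. Counting, for a vertex `u` of degree `r`, the vertices of degree `r` at distance
two from `u` then gives `1 + r (r - 1) ≤ n / 2`, which fails for `r > 3`.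
-/

open Finset

namespace SimpleGraph
variable {V : Type*} {G : SimpleGraph V}

theorem not_adj_of_five_le_egirth (h : 5 ≤ G.egirth) {a b c : V} (hab : G.Adj a b)
    (hbc : G.Adj b c) : ¬G.Adj c a := by
  intro hca
  have hc : (Walk.cons hab (.cons hbc (.cons hca .nil))).IsCycle := by
    simp [Walk.cons_isCycle_iff, hab.ne, hbc.ne, hca.ne, hca.ne.symm, hab.ne.symm]
  have := h.trans (egirth_le_length hc)
  norm_num at this

theorem eq_of_five_le_egirth (h : 5 ≤ G.egirth) {a b c d : V} (hab : G.Adj a b)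
    (hbc : G.Adj b c) (had : G.Adj a d) (hdc : G.Adj d c) (hac : a ≠ c) : b = d := by
  by_contra hbd
  have hc : (Walk.cons hab (.cons hbc (.cons hdc.symm (.cons had.symm .nil)))).IsCycle := by
    simp [Walk.cons_isCycle_iff, hab.ne, hbc.ne, had.ne, hab.ne.symm, hdc.ne.symm, had.ne.symm,
      hac, hac.symm, hbd]
  have := h.trans (egirth_le_length hc)
  norm_num at this

section LocallyFinite
variable [DecidableEq V] [LocallyFinite G]

theorem pairwiseDisjoint_insert_erase_neighborFinset (h : 5 ≤ G.egirth) (u : V) :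
    (G.neighborSet u).PairwiseDisjoint fun w ↦ insert w ((G.neighborFinset w).erase u) := by
  intro w hw w' hw' hne
  simp only [mem_neighborSet] at hw hw'
  rw [Function.onFun, Finset.disjoint_left]
  simp only [Finset.mem_insert, Finset.mem_erase, mem_neighborFinset]
  rintro x (rfl | ⟨hxu, hwx⟩) (rfl | ⟨hxu', hwx'⟩)
  · exact hne rfl
  · exact not_adj_of_five_le_egirth h hw' hwx' hw.symm
  · exact not_adj_of_five_le_egirth h hw hwx hw'.symm
  · exact hne (eq_of_five_le_egirth h hw hwx hw' hwx' (Ne.symm hxu))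

theorem sum_card_inter_insert_erase_neighborFinset_le (h : 5 ≤ G.egirth) (u : V)
    (S : Finset V) :
    ∑ w ∈ G.neighborFinset u, #(S ∩ insert w ((G.neighborFinset w).erase u)) ≤
      #(S.erase u) := by
  rw [← card_biUnion]
  · refine card_le_card fun x ↦ ?_
    simp only [Finset.mem_biUnion, Finset.mem_inter, Finset.mem_insert, Finset.mem_erase,
      mem_neighborFinset]
    rintro ⟨w, huw, hxS, rfl | ⟨hxu, -⟩⟩
    · exact ⟨huw.ne.symm, hxS⟩
    · exact ⟨hxu, hxS⟩
  · rw [coe_neighborFinset]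
    exact (pairwiseDisjoint_insert_erase_neighborFinset h u).mono_on
      fun _ _ ↦ Finset.inter_subset_right

theorem one_add_degree_mul_le_card (h : 5 ≤ G.egirth) {S : Finset V} {u : V} {k : ℕ}
    (hu : u ∈ S)
    (hS : ∀ w ∈ G.neighborFinset u, w ∉ S ∧ k ≤ #(G.neighborFinset w ∩ S)) :
    1 + G.degree u * (k - 1) ≤ #S := by
  have hsum := sum_card_inter_insert_erase_neighborFinset_le h u S
  have hterm : ∀ w ∈ G.neighborFinset u,
      k - 1 ≤ #(S ∩ insert w ((G.neighborFinset w).erase u)) := by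
    intro w hw
    obtain ⟨hwS, hk⟩ := hS w hw
    rw [mem_neighborFinset] at hw
    rw [Finset.inter_insert_of_notMem hwS, Finset.inter_erase, Finset.inter_comm,
      card_erase_of_mem]
    · omega
    · simpa [hu] using hw.symm
  have := sum_le_sum hterm
  rw [Finset.sum_const, smul_eq_mul, card_neighborFinset_eq_degree] at this
  rw [card_erase_of_mem hu] at hsum
  have := card_pos.2 ⟨u, hu⟩
  omega

end LocallyFinite

section Finite
variable [Fintype V] [DecidableRel G.Adj]

variable (G) in
def verticesOfDegree (d : ℕ) : Finset V := {v | G.degree v = d}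

@[simp]
theorem mem_verticesOfDegree {d : ℕ} {v : V} : v ∈ G.verticesOfDegree d ↔ G.degree v = d := by
  simp [verticesOfDegree]

theorem disjoint_verticesOfDegree {d e : ℕ} (hde : d ≠ e) :
    Disjoint (G.verticesOfDegree d) (G.verticesOfDegree e) :=
  Finset.disjoint_left.2 fun _ h₁ h₂ ↦ hde <| (mem_verticesOfDegree.1 h₁).symm.trans
    (mem_verticesOfDegree.1 h₂)

theorem sum_degree_verticesOfDegree (d : ℕ) :
    ∑ v ∈ G.verticesOfDegree d, G.degree v = #(G.verticesOfDegree d) * d := by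
  rw [sum_congr rfl fun v hv ↦ mem_verticesOfDegree.1 hv, Finset.sum_const, smul_eq_mul]

theorem one_add_sum_degree_le_card (h : 5 ≤ G.egirth) (u : V) :
    1 + ∑ w ∈ G.neighborFinset u, G.degree w ≤ Fintype.card V := by
  classical
  have hsum := sum_card_inter_insert_erase_neighborFinset_le h u Finset.univ
  have hterm : ∀ w ∈ G.neighborFinset u,
      #(Finset.univ ∩ insert w ((G.neighborFinset w).erase u)) = G.degree w := by
    intro w hw
    rw [mem_neighborFinset] at hw
    rw [Finset.univ_inter, card_insert_of_notMem (by simp),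
      card_erase_of_mem (by simpa using hw.symm), card_neighborFinset_eq_degree]
    have := G.degree_pos_iff_exists_adj w |>.2 ⟨u, hw.symm⟩
    omega
  rw [sum_congr rfl hterm, card_erase_of_mem (Finset.mem_univ u), Finset.card_univ] at hsum
  have := Fintype.card_pos_iff.2 ⟨u⟩
  omega

variable {r : ℕ} [DecidableEq V]

theorem sum_card_neighborFinset_inter_comm (s t : Finset V) :
    ∑ v ∈ s, #(G.neighborFinset v ∩ t) = ∑ w ∈ t, #(G.neighborFinset w ∩ s) := by
  convert sum_card_bipartiteAbove_eq_sum_card_bipartiteBelow (s := s) (t := t) (r := G.Adj)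
    using 3 with v - w -
  · ext; simp [bipartiteAbove, and_comm]
  · ext; simp [bipartiteBelow, adj_comm, and_comm]

theorem verticesOfDegree_union (hdeg : ∀ v, G.degree v = r ∨ G.degree v = r + 1) :
    G.verticesOfDegree r ∪ G.verticesOfDegree (r + 1) = Finset.univ := by
  ext w; simpa using hdeg w

theorem degree_eq_add_card_neighborFinset_inter
    (hdeg : ∀ v, G.degree v = r ∨ G.degree v = r + 1) (v : V) :
    G.degree v = #(G.neighborFinset v ∩ G.verticesOfDegree r) +
      #(G.neighborFinset v ∩ G.verticesOfDegree (r + 1)) := by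
  rw [← card_union_of_disjoint ((disjoint_verticesOfDegree r.succ_ne_self.symm).mono
      Finset.inter_subset_right Finset.inter_subset_right), ← Finset.inter_union_distrib_left,
    verticesOfDegree_union hdeg, Finset.inter_univ, card_neighborFinset_eq_degree]

theorem sum_degree_neighborFinset (hdeg : ∀ v, G.degree v = r ∨ G.degree v = r + 1) (v : V) :
    ∑ w ∈ G.neighborFinset v, G.degree w =
      G.degree v * r + #(G.neighborFinset v ∩ G.verticesOfDegree (r + 1)) := by
  have hsplit (w : V) : G.degree w = r + if w ∈ G.verticesOfDegree (r + 1) then 1 else 0 := by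
    rcases hdeg w with h | h <;> simp [h]
  rw [sum_congr rfl fun w _ ↦ hsplit w, sum_add_distrib, Finset.sum_const, smul_eq_mul,
    card_neighborFinset_eq_degree, sum_boole, filter_mem_eq_inter, Nat.cast_id]

theorem degree_eq_succ_of_adj (hdeg : ∀ v, G.degree v = r ∨ G.degree v = r + 1)
    (hbal : #(G.verticesOfDegree r) = #(G.verticesOfDegree (r + 1)))
    (hsparse : ∀ v ∈ G.verticesOfDegree (r + 1),
      #(G.neighborFinset v ∩ G.verticesOfDegree (r + 1)) ≤ 1)
    {v w : V} (hv : G.degree v = r) (hvw : G.Adj v w) : G.degree w = r + 1 := by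
  have hA := sum_degree_verticesOfDegree (G := G) (r + 1)
  have hB := sum_degree_verticesOfDegree (G := G) r
  rw [sum_congr rfl fun v _ ↦ degree_eq_add_card_neighborFinset_inter hdeg v, sum_add_distrib]
    at hA hB
  have hswap := sum_card_neighborFinset_inter_comm (G := G) (G.verticesOfDegree (r + 1))
    (G.verticesOfDegree r)
  set A := G.verticesOfDegree (r + 1)
  set B := G.verticesOfDegree r
  have hAA : ∑ v ∈ A, #(G.neighborFinset v ∩ A) ≤ #A := by
    simpa using sum_le_sum hsparse
  have hBB : ∑ v ∈ B, #(G.neighborFinset v ∩ B) = 0 := by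
    have : #A * (r + 1) = #A * r + #A := by ring
    rw [hbal] at hB
    omega
  have hvB : G.neighborFinset v ∩ B = ∅ :=
    card_eq_zero.1 <| sum_eq_zero_iff.1 hBB v (mem_verticesOfDegree.2 hv)
  have hwB : w ∉ B := fun hw ↦
    Finset.notMem_empty w (hvB ▸ Finset.mem_inter.2 ⟨(mem_neighborFinset ..).2 hvw, hw⟩)
  exact (hdeg w).resolve_left (by simpa [B] using hwB)

end Finite

end SimpleGraph

theorem deg_eq_degree {V : Type*} {G : SimpleGraph V} [G.LocallyFinite] (v : V) :
    deg G v = G.degree v := by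
  rw [deg, ← card_neighborFinset_eq_degree, neighborFinset_def, Set.ncard_eq_toFinset_card']

namespace IsBabi

variable {V : Type*} {G : SimpleGraph V} {r s g : ℕ}

theorem five_le_egirth (h : IsBabi r s 5 G) : 5 ≤ G.egirth :=
  le_egirth.2 fun _ _ hw ↦ by exact_mod_cast h.1 ▸ G.girth_le_length hw

variable [Fintype V]

section DecidableAdj
variable [DecidableRel G.Adj]

theorem degree_eq_or (h : IsBabi r s g G) (v : V) : G.degree v = r ∨ G.degree v = s := by
  simpa only [deg_eq_degree] using h.2.1 v

theorem exists_degree_eq_left (h : IsBabi r s g G) : ∃ v, G.degree v = r := by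
  simpa only [deg_eq_degree] using h.2.2.1

theorem exists_degree_eq_right (h : IsBabi r s g G) : ∃ v, G.degree v = s := by
  simpa only [deg_eq_degree] using h.2.2.2.1

theorem card_verticesOfDegree_eq (h : IsBabi r s g G) :
    #(G.verticesOfDegree r) = #(G.verticesOfDegree s) := by
  have hset (d : ℕ) : {v | deg G v = d} = (G.verticesOfDegree d : Set V) := by
    ext; simp [deg_eq_degree]
  simpa only [hset, Set.ncard_coe_finset] using h.2.2.2.2

theorem card_eq_two_mul (h : IsBabi r (r + 1) g G) :
    Fintype.card V = 2 * #(G.verticesOfDegree r) := by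
  classical
  rw [← Finset.card_univ, ← verticesOfDegree_union h.degree_eq_or,
    card_union_of_disjoint (disjoint_verticesOfDegree r.succ_ne_self.symm),
    ← h.card_verticesOfDegree_eq, two_mul]

theorem even_card_verticesOfDegree (h : IsBabi r (r + 1) g G) :
    Even #(G.verticesOfDegree r) := by
  have hodd := G.even_card_odd_degree_vertices
  rcases Nat.even_or_odd r with hr | hr
  · have : ({v | Odd (G.degree v)} : Finset V) = G.verticesOfDegree (r + 1) := by
      ext v; rcases h.degree_eq_or v with hv | hv <;> simp [hv, hr]
    rwa [this, ← h.card_verticesOfDegree_eq] at hodd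
  · have : ({v | Odd (G.degree v)} : Finset V) = G.verticesOfDegree r := by
      ext v; rcases h.degree_eq_or v with hv | hv <;> simp [hv, hr]
    rwa [this] at hodd

end DecidableAdj

theorem four_dvd_card (h : IsBabi r (r + 1) g G) : 4 ∣ Fintype.card V := by
  classical
  obtain ⟨m, hm⟩ := h.even_card_verticesOfDegree
  exact ⟨m, by rw [h.card_eq_two_mul, hm]; ring⟩

theorem sq_add_add_one_le_card (h : IsBabi r (r + 1) 5 G) : r ^ 2 + r + 1 ≤ Fintype.card V := by
  classical
  obtain ⟨v, hv⟩ := h.exists_degree_eq_right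
  have := G.one_add_sum_degree_le_card h.five_le_egirth v
  rw [sum_degree_neighborFinset h.degree_eq_or, hv] at this
  nlinarith

theorem card_ne_sq_add_add_two (hr : 3 < r) (h : IsBabi r (r + 1) 5 G) :
    Fintype.card V ≠ r ^ 2 + r + 2 := by
  classical
  intro hn
  have hdeg := h.degree_eq_or
  have hsparse : ∀ v ∈ G.verticesOfDegree (r + 1),
      #(G.neighborFinset v ∩ G.verticesOfDegree (r + 1)) ≤ 1 := by
    intro v hv
    have := G.one_add_sum_degree_le_card h.five_le_egirth v
    rw [sum_degree_neighborFinset hdeg, mem_verticesOfDegree.1 hv] at this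
    nlinarith
  obtain ⟨u, hu⟩ := h.exists_degree_eq_left
  have hnbr : ∀ w ∈ G.neighborFinset u,
      w ∉ G.verticesOfDegree r ∧ r ≤ #(G.neighborFinset w ∩ G.verticesOfDegree r) := by
    intro w hw
    have hw' := degree_eq_succ_of_adj hdeg h.card_verticesOfDegree_eq hsparse hu
      ((mem_neighborFinset ..).1 hw)
    refine ⟨by simp [hw'], ?_⟩
    have := degree_eq_add_card_neighborFinset_inter hdeg w
    have := hsparse w (mem_verticesOfDegree.2 hw')
    omega
  have hB := G.one_add_degree_mul_le_card h.five_le_egirth (mem_verticesOfDegree.2 hu) hnbr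
  rw [hu] at hB
  have := h.card_eq_two_mul
  obtain ⟨s, rfl⟩ : ∃ s, r = s + 1 := ⟨r - 1, by omega⟩
  simp only [add_tsub_cancel_right] at hB
  nlinarith

end IsBabi

/-- the order of an `(r,r+1;5)`-babi-graph is divisible by 4, and
the resulting lower bounds on `n_bb(r,r+1;5)` for `r > 2`. -/
theorem stmt_15 (r : ℕ) :
    (∀ (n : ℕ) (G : SimpleGraph (Fin n)), IsBabi r (r + 1) 5 G → 4 ∣ n) ∧
    (2 < r →
      ((r % 4 = 0 ∨ r % 4 = 3) →
        ∀ (n : ℕ) (G : SimpleGraph (Fin n)), IsBabi r (r + 1) 5 G → r ^ 2 + r + 4 ≤ n) ∧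
      ((r % 4 = 1 ∨ r % 4 = 2) →
        ∀ (n : ℕ) (G : SimpleGraph (Fin n)), IsBabi r (r + 1) 5 G → r ^ 2 + r + 6 ≤ n)) := by
  have hmod : (r ^ 2 + r) % 4 = ((r % 4) ^ 2 + r % 4) % 4 := by simp [Nat.add_mod, Nat.pow_mod]
  refine ⟨fun n G h ↦ by simpa using h.four_dvd_card,
    fun hr ↦ ⟨fun hr4 n G h ↦ ?_, fun hr4 n G h ↦ ?_⟩⟩
  · have h4 := h.four_dvd_card
    have hM := h.sq_add_add_one_le_card
    simp only [Fintype.card_fin] at h4 hM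
    rcases hr4 with h | h <;> simp [h] at hmod <;> omega
  · have h4 := h.four_dvd_card
    have hM := h.sq_add_add_one_le_card
    have hne := h.card_ne_sq_add_add_two (by omega)
    simp only [Fintype.card_fin] at h4 hM hne
    rcases hr4 with h | h <;> simp [h] at hmod <;> omega
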